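/- (Specialized strict S-lemma, equivalence (i)⇔(ii).) Let N ∈ Π_{1,r}, a ∈ ℝ, and λ ∈ ℝ^r. Then λᵀz + a > 0 for all z ∈ Z_r(N) if and only if the symmetric (1+r)×(1+r) matrix [[−λᵀN₂₂⁻¹N₂₁ + a, (N|N₂₂)^(1/2) λᵀ],[(N|N₂₂)^(1/2) λ, (λᵀN₂₂⁻¹N₂₁ − a) N₂₂]] is positive definite. -/

import Mathlib

open Matrix

noncomputable section

/-- `Z_r(N)` for a symmetric `N ∈ 𝕊^(1+r)` given by its blocks
`N₁₁ ∈ ℝ`, `N₂₁ = N₁₂ᵀ ∈ ℝ^r` and `N₂₂ ∈ 𝕊^r`: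
the set of `z` with `[1; z]ᵀ N [1; z] ≥ 0`. -/
def Zset {r : ℕ} (N11 : ℝ) (N21 : Fin r → ℝ) (N22 : Matrix (Fin r) (Fin r) ℝ) :
    Set (Fin r → ℝ) :=
  {z | 0 ≤ N11 + 2 * (N21 ⬝ᵥ z) + z ⬝ᵥ N22 *ᵥ z}

/-- The symmetric `(1+r) × (1+r)` block matrix `[[c, lᵀ], [l, M]]`. -/
def bmat {r : ℕ} (c : ℝ) (l : Fin r → ℝ) (M : Matrix (Fin r) (Fin r) ℝ) :
    Matrix (Unit ⊕ Fin r) (Unit ⊕ Fin r) ℝ :=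
  Matrix.fromBlocks (Matrix.of fun _ _ => c) (Matrix.of fun _ j => l j)
    (Matrix.of fun i _ => l i) M

namespace SLemmaAux

variable {r : ℕ}

lemma swapDot {P : Matrix (Fin r) (Fin r) ℝ} (hs : Pᵀ = P) (x y : Fin r → ℝ) :
    x ⬝ᵥ P *ᵥ y = y ⬝ᵥ P *ᵥ x := by
  rw [dotProduct_mulVec, ← mulVec_transpose, hs, dotProduct_comm]

lemma posdef_quad {P : Matrix (Fin r) (Fin r) ℝ} (hP : P.PosDef) {x : Fin r → ℝ} (hx : x ≠ 0) :
    0 < x ⬝ᵥ P *ᵥ x := by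
  simpa using hP.dotProduct_mulVec_pos hx

lemma psd_quad {P : Matrix (Fin r) (Fin r) ℝ} (hP : P.PosDef) (x : Fin r → ℝ) :
    0 ≤ x ⬝ᵥ P *ᵥ x := by
  simpa using hP.posSemidef.dotProduct_mulVec_nonneg x

lemma symm_of_posdef {P : Matrix (Fin r) (Fin r) ℝ} (hP : P.PosDef) : Pᵀ = P := by
  have := hP.isHermitian
  rwa [Matrix.IsHermitian, conjTranspose_eq_transpose_of_trivial] at this

lemma mulVec_inv_cancel {P : Matrix (Fin r) (Fin r) ℝ} (hP : P.PosDef) (v : Fin r → ℝ) :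
    P *ᵥ (P⁻¹ *ᵥ v) = v := by
  rw [mulVec_mulVec, Matrix.mul_nonsing_inv _ hP.det_pos.ne'.isUnit, one_mulVec]

lemma cauchy_schwarz {P : Matrix (Fin r) (Fin r) ℝ} (hP : P.PosDef) (l w : Fin r → ℝ) :
    (l ⬝ᵥ w) ^ 2 ≤ (l ⬝ᵥ P⁻¹ *ᵥ l) * (w ⬝ᵥ P *ᵥ w) := by
  set u := P⁻¹ *ᵥ l with hu
  have hsymm := symm_of_posdef hP
  have hPu : P *ᵥ u = l := mulVec_inv_cancel hP l
  have e2 : u ⬝ᵥ P *ᵥ w = l ⬝ᵥ w := by rw [swapDot hsymm, hPu, dotProduct_comm]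
  have e3 : w ⬝ᵥ P *ᵥ u = l ⬝ᵥ w := by rw [hPu, dotProduct_comm]
  have e4 : u ⬝ᵥ P *ᵥ u = l ⬝ᵥ P⁻¹ *ᵥ l := by rw [hPu, dotProduct_comm, hu]
  have key : ∀ t : ℝ, 0 ≤ (l ⬝ᵥ P⁻¹ *ᵥ l) * (t * t) + (2 * (l ⬝ᵥ w)) * t + w ⬝ᵥ P *ᵥ w := by
    intro t
    have h0 := psd_quad hP (w + t • u)
    have e1 : (w + t • u) ⬝ᵥ P *ᵥ (w + t • u)
        = w ⬝ᵥ P *ᵥ w + t * (u ⬝ᵥ P *ᵥ w) + t * (w ⬝ᵥ P *ᵥ u) + t * t * (u ⬝ᵥ P *ᵥ u) := by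
      simp only [mulVec_add, mulVec_smul, dotProduct_add, add_dotProduct, smul_dotProduct,
        dotProduct_smul, smul_eq_mul]
      ring
    rw [e1, e2, e3, e4] at h0
    linarith
  have hd := discrim_le_zero key
  rw [discrim] at hd
  nlinarith [hd]

def vec (t : ℝ) (v : Fin r → ℝ) : Unit ⊕ Fin r → ℝ := Sum.elim (fun _ => t) v

lemma vec_decomp (x : Unit ⊕ Fin r → ℝ) : x = vec (x (Sum.inl ())) (x ∘ Sum.inr) := by
  funext i; rcases i with i | i
  · cases i; rfl
  · rfl

lemma vec_ne_zero_iff (t : ℝ) (v : Fin r → ℝ) : vec t v ≠ 0 ↔ ¬(t = 0 ∧ v = 0) := by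
  constructor
  · rintro h ⟨rfl, rfl⟩
    exact h (by funext i; rcases i with i | i <;> rfl)
  · intro h hx
    apply h
    constructor
    · exact congrFun hx (Sum.inl ())
    · funext i; exact congrFun hx (Sum.inr i)

lemma bmat_quad (c : ℝ) (l : Fin r → ℝ) (M : Matrix (Fin r) (Fin r) ℝ) (t : ℝ) (v : Fin r → ℝ) :
    vec t v ⬝ᵥ bmat c l M *ᵥ vec t v
      = c * t ^ 2 + 2 * t * (l ⬝ᵥ v) + v ⬝ᵥ M *ᵥ v := by
  show Sum.elim _ _ ⬝ᵥ bmat c l M *ᵥ Sum.elim _ _ = _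
  rw [bmat, fromBlocks_mulVec, sumElim_dotProduct_sumElim]
  simp only [mulVec, dotProduct, of_apply, Pi.add_apply, Function.comp, Sum.elim_inl,
    Sum.elim_inr, Finset.univ_unique, Finset.sum_singleton, mul_add, add_mul,
    Finset.sum_add_distrib, Finset.mul_sum, Finset.sum_mul]
  ring_nf
  have e : (∑ x, t * l x * v x) + ∑ x, t * v x * l x = ∑ x, t * l x * v x * 2 := by
    rw [← Finset.sum_add_distrib]
    exact Finset.sum_congr rfl fun i _ => by ring
  linarith [e]

lemma bmat_herm (c : ℝ) (l : Fin r → ℝ) {M : Matrix (Fin r) (Fin r) ℝ} (hM : Mᵀ = M) :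
    (bmat c l M).IsHermitian := by
  rw [Matrix.IsHermitian, conjTranspose_eq_transpose_of_trivial, bmat, fromBlocks_transpose]
  rw [hM]
  congr 1

lemma star_pi (x : Unit ⊕ Fin r → ℝ) : star x = x := by
  funext i; exact star_trivial _

end SLemmaAux

open SLemmaAux

set_option maxHeartbeats 1600000 in
/-- **specialized strict S-lemma, (i) ⇔ (ii).** Let `N ∈ Π_{1,r}` (i.e. `N₂₂ < 0`
and Schur complement `N|N₂₂ ≥ 0`), `a ∈ ℝ`, `λ ∈ ℝ^r`.  Then `λᵀz + a > 0` for all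
`z ∈ Z_r(N)` iff the matrix
`[[-λᵀN₂₂⁻¹N₂₁ + a, (N|N₂₂)^(1/2) λᵀ], [(N|N₂₂)^(1/2) λ, (λᵀN₂₂⁻¹N₂₁ - a) N₂₂]]`
is positive definite. -/
theorem pos_on_Zset_iff_posDef {r : ℕ} (N11 : ℝ) (N21 : Fin r → ℝ)
    (N22 : Matrix (Fin r) (Fin r) ℝ) (hN22 : (-N22).PosDef)
    (hschur : 0 ≤ N11 - N21 ⬝ᵥ N22⁻¹ *ᵥ N21) (a : ℝ) (l : Fin r → ℝ) :
    (∀ z ∈ Zset N11 N21 N22, 0 < l ⬝ᵥ z + a) ↔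
      (bmat (-(l ⬝ᵥ N22⁻¹ *ᵥ N21) + a)
        (Real.sqrt (N11 - N21 ⬝ᵥ N22⁻¹ *ᵥ N21) • l)
        ((l ⬝ᵥ N22⁻¹ *ᵥ N21 - a) • N22)).PosDef := by
  set P : Matrix (Fin r) (Fin r) ℝ := -N22 with hPdef
  have hP : P.PosDef := hN22
  have hsymm : Pᵀ = P := symm_of_posdef hP
  have hN22P : N22 = -P := by rw [hPdef, neg_neg]
  have hinv : N22⁻¹ = -(P⁻¹) := by
    refine Matrix.inv_eq_left_inv ?_
    rw [hN22P, Matrix.neg_mul, Matrix.mul_neg, neg_neg,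
      Matrix.nonsing_inv_mul _ hP.det_pos.ne'.isUnit]
  set z₀ : Fin r → ℝ := P⁻¹ *ᵥ N21 with hz₀def
  set q : ℝ := l ⬝ᵥ P⁻¹ *ᵥ l with hqdef
  set s : ℝ := N11 - N21 ⬝ᵥ N22⁻¹ *ᵥ N21 with hsdef
  set c : ℝ := -(l ⬝ᵥ N22⁻¹ *ᵥ N21) + a with hcdef
  have hinvv : ∀ v : Fin r → ℝ, N22⁻¹ *ᵥ v = -(P⁻¹ *ᵥ v) := by
    intro v; rw [hinv, neg_mulVec]
  have hc : c = l ⬝ᵥ z₀ + a := by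
    rw [hcdef, hinvv, dotProduct_neg, neg_neg, hz₀def]
  have hs : s = N11 + N21 ⬝ᵥ z₀ := by
    rw [hsdef, hinvv, dotProduct_neg, sub_neg_eq_add, hz₀def]
  have hs0 : 0 ≤ s := hschur
  have hq0 : 0 ≤ q := psd_quad hP.inv l
  have hPz₀ : P *ᵥ z₀ = N21 := mulVec_inv_cancel hP N21
  have hmem : ∀ z, N11 + 2 * (N21 ⬝ᵥ z) + z ⬝ᵥ N22 *ᵥ z
      = s - (z - z₀) ⬝ᵥ P *ᵥ (z - z₀) := by
    intro z
    have h1 : z ⬝ᵥ N22 *ᵥ z = -(z ⬝ᵥ P *ᵥ z) := by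
      rw [hN22P, neg_mulVec, dotProduct_neg]
    have e1 : z ⬝ᵥ P *ᵥ z₀ = N21 ⬝ᵥ z := by rw [hPz₀, dotProduct_comm]
    have e2 : z₀ ⬝ᵥ P *ᵥ z = N21 ⬝ᵥ z := by rw [swapDot hsymm, e1]
    have e3 : z₀ ⬝ᵥ P *ᵥ z₀ = N21 ⬝ᵥ z₀ := by rw [hPz₀, dotProduct_comm]
    have h2 : (z - z₀) ⬝ᵥ P *ᵥ (z - z₀)
        = z ⬝ᵥ P *ᵥ z - 2 * (N21 ⬝ᵥ z) + N21 ⬝ᵥ z₀ := by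
      simp only [sub_dotProduct, dotProduct_sub, mulVec_sub]
      rw [e1, e2, e3]; ring
    rw [h1, h2, hs]; ring
  have hmem' : ∀ z, z ∈ Zset N11 N21 N22 ↔ (z - z₀) ⬝ᵥ P *ᵥ (z - z₀) ≤ s := by
    intro z
    rw [Zset, Set.mem_setOf_eq, hmem z]
    constructor <;> intro h <;> linarith
  -- key 1 : the geometric side
  have key1 : (∀ z ∈ Zset N11 N21 N22, 0 < l ⬝ᵥ z + a) ↔ (0 < c ∧ s * q < c ^ 2) := by
    constructor
    · intro h
      have hz₀mem : z₀ ∈ Zset N11 N21 N22 := by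
        rw [hmem' z₀, sub_self]
        simpa using hs0
      have hc0 : 0 < c := by rw [hc]; exact h z₀ hz₀mem
      refine ⟨hc0, ?_⟩
      rcases hq0.lt_or_eq with hq | hq
      · set u : Fin r → ℝ := P⁻¹ *ᵥ l with hudef
        have hlu : l ⬝ᵥ u = q := rfl
        have hPu : P *ᵥ u = l := mulVec_inv_cancel hP l
        have huPu : u ⬝ᵥ P *ᵥ u = q := by rw [hPu, dotProduct_comm, hlu]
        set z : Fin r → ℝ := z₀ - Real.sqrt (s / q) • u with hzdef
        have hzz₀ : z - z₀ = -(Real.sqrt (s / q) • u) := by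
          rw [hzdef]; abel
        have hσ : Real.sqrt (s / q) * Real.sqrt (s / q) = s / q :=
          Real.mul_self_sqrt (by positivity)
        have hzmem : z ∈ Zset N11 N21 N22 := by
          rw [hmem' z, hzz₀]
          have : (-(Real.sqrt (s / q) • u)) ⬝ᵥ P *ᵥ (-(Real.sqrt (s / q) • u))
              = (s / q) * (u ⬝ᵥ P *ᵥ u) := by
            rw [neg_dotProduct, mulVec_neg, dotProduct_neg, neg_neg, smul_dotProduct,
              mulVec_smul, dotProduct_smul, smul_eq_mul, smul_eq_mul, ← mul_assoc, hσ]
          rw [this, huPu, div_mul_cancel₀ _ hq.ne']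
        have hval := h z hzmem
        have hlz : l ⬝ᵥ z + a = c - Real.sqrt (s / q) * q := by
          rw [hc, hzdef, dotProduct_sub, dotProduct_smul, smul_eq_mul, hlu]; ring
        rw [hlz] at hval
        have hB : (Real.sqrt (s / q) * q) ^ 2 = s * q := by
          rw [mul_pow, Real.sq_sqrt (by positivity : (0:ℝ) ≤ s / q)]
          field_simp
        have h3 : 0 < (c - Real.sqrt (s / q) * q) * (c + Real.sqrt (s / q) * q) :=
          mul_pos hval (by positivity)
        have h4 : c ^ 2 - s * q
            = (c - Real.sqrt (s / q) * q) * (c + Real.sqrt (s / q) * q) := by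
          rw [← hB]; ring
        have h5 : 0 < c ^ 2 - s * q := by rw [h4]; exact h3
        linarith [h5]
      · rw [← hq, mul_zero]
        positivity
    · rintro ⟨hc0, hsq⟩ z hz
      rw [hmem' z] at hz
      set w : Fin r → ℝ := z - z₀ with hwdef
      have hcs : (l ⬝ᵥ w) ^ 2 ≤ q * (w ⬝ᵥ P *ᵥ w) := cauchy_schwarz hP l w
      have hwP : 0 ≤ w ⬝ᵥ P *ᵥ w := psd_quad hP w
      have h2 : (l ⬝ᵥ w) ^ 2 < c ^ 2 := by nlinarith [mul_le_mul_of_nonneg_left hz hq0]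
      have hlz : l ⬝ᵥ z + a = c + l ⬝ᵥ w := by
        rw [hc, hwdef, dotProduct_sub]; ring
      rw [hlz]
      nlinarith [sq_nonneg (l ⬝ᵥ w + c), hc0, h2]
  -- key 2 : the matrix side
  have hMblock : (l ⬝ᵥ N22⁻¹ *ᵥ N21 - a) • N22 = c • P := by
    have h1 : l ⬝ᵥ N22⁻¹ *ᵥ N21 - a = -c := by rw [hcdef]; ring
    rw [h1, hN22P, neg_smul, smul_neg, neg_neg]
  have key2 : (bmat c (Real.sqrt s • l) ((l ⬝ᵥ N22⁻¹ *ᵥ N21 - a) • N22)).PosDef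
      ↔ (0 < c ∧ s * q < c ^ 2) := by
    rw [hMblock]
    have hquad : ∀ (t : ℝ) (v : Fin r → ℝ),
        vec t v ⬝ᵥ bmat c (Real.sqrt s • l) (c • P) *ᵥ vec t v
          = c * t ^ 2 + 2 * t * (Real.sqrt s * (l ⬝ᵥ v)) + c * (v ⬝ᵥ P *ᵥ v) := by
      intro t v
      rw [bmat_quad, smul_dotProduct, smul_eq_mul, smul_mulVec, dotProduct_smul,
        smul_eq_mul]
    constructor
    · intro hB
      have hc0 : 0 < c := by
        have hx : vec (1:ℝ) (0 : Fin r → ℝ) ≠ 0 := by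
          rw [vec_ne_zero_iff]; simp
        have := hB.dotProduct_mulVec_pos hx
        rw [star_pi, hquad] at this
        simpa using this
      refine ⟨hc0, ?_⟩
      rcases hq0.lt_or_eq with hq | hq
      · set u : Fin r → ℝ := P⁻¹ *ᵥ l with hudef
        have hlu : l ⬝ᵥ u = q := rfl
        have hPu : P *ᵥ u = l := mulVec_inv_cancel hP l
        have huPu : u ⬝ᵥ P *ᵥ u = q := by rw [hPu, dotProduct_comm, hlu]
        have hu0 : u ≠ 0 := by
          intro h0
          rw [h0, dotProduct_zero] at hlu
          exact hq.ne hlu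
        have hx : vec (Real.sqrt s * q) ((-c) • u) ≠ 0 := by
          rw [vec_ne_zero_iff]
          rintro ⟨-, hv⟩
          exact hu0 (by simpa [smul_eq_zero, hc0.ne'] using hv)
        have hval := hB.dotProduct_mulVec_pos hx
        rw [star_pi, hquad] at hval
        have e1 : l ⬝ᵥ (-c) • u = -c * q := by
          rw [dotProduct_smul, smul_eq_mul, hlu]
        have e2 : ((-c) • u) ⬝ᵥ P *ᵥ ((-c) • u) = c ^ 2 * q := by
          rw [smul_dotProduct, mulVec_smul, dotProduct_smul, smul_eq_mul, smul_eq_mul,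
            huPu]
          ring
        rw [e1, e2] at hval
        have hss : Real.sqrt s ^ 2 = s := Real.sq_sqrt hs0
        have hval' : 0 < c ^ 3 * q - c * s * q ^ 2 := by
          have expand : c * (Real.sqrt s * q) ^ 2
              + 2 * (Real.sqrt s * q) * (Real.sqrt s * (-c * q)) + c * (c ^ 2 * q)
              = c ^ 3 * q - c * s * q ^ 2 := by
            linear_combination (-(c * q ^ 2)) * hss
          linarith [expand ▸ hval]
        nlinarith [hval', mul_pos hc0 hq]
      · rw [← hq, mul_zero]
        positivity
    · rintro ⟨hc0, hsq⟩
      refine Matrix.PosDef.of_dotProduct_mulVec_pos (bmat_herm _ _ (by rw [transpose_smul, hsymm])) fun x hx => ?_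
      rw [star_pi, vec_decomp x, hquad]
      set t := x (Sum.inl ()) with htdef
      set v := x ∘ Sum.inr with hvdef
      have hx' : ¬(t = 0 ∧ v = 0) := by
        rw [← vec_ne_zero_iff]
        rw [vec_decomp x] at hx
        exact hx
      by_cases hv : v = 0
      · have ht : t ≠ 0 := fun h => hx' ⟨h, hv⟩
        rw [hv]
        simp only [dotProduct_zero, mulVec_zero, mul_zero, add_zero]
        positivity
      · have hV : 0 < v ⬝ᵥ P *ᵥ v := posdef_quad hP hv
        have hcs : (l ⬝ᵥ v) ^ 2 ≤ q * (v ⬝ᵥ P *ᵥ v) := cauchy_schwarz hP l v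
        have hss : Real.sqrt s ^ 2 = s := Real.sq_sqrt hs0
        have h1 : s * (l ⬝ᵥ v) ^ 2 ≤ s * (q * (v ⬝ᵥ P *ᵥ v)) :=
          mul_le_mul_of_nonneg_left hcs hs0
        have h2 : s * (q * (v ⬝ᵥ P *ᵥ v)) < c ^ 2 * (v ⬝ᵥ P *ᵥ v) := by
          rw [← mul_assoc]
          exact mul_lt_mul_of_pos_right hsq hV
        have expand : c * (c * t ^ 2 + 2 * t * (Real.sqrt s * (l ⬝ᵥ v)) + c * (v ⬝ᵥ P *ᵥ v))
            = (c * t + Real.sqrt s * (l ⬝ᵥ v)) ^ 2 - s * (l ⬝ᵥ v) ^ 2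
              + c ^ 2 * (v ⬝ᵥ P *ᵥ v) := by
          linear_combination (-((l ⬝ᵥ v) ^ 2)) * hss
        have hpos : 0 < c * (c * t ^ 2 + 2 * t * (Real.sqrt s * (l ⬝ᵥ v))
            + c * (v ⬝ᵥ P *ᵥ v)) := by
          rw [expand]
          nlinarith [sq_nonneg (c * t + Real.sqrt s * (l ⬝ᵥ v)), h1, h2]
        nlinarith [hpos, hc0]
  exact key1.trans key2.symm
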